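/- arXiv:2206.04632 — 2 statements merged into one kernel-verified Lean document; each statement's English description precedes it below -/
import Mathlib

section
/- Let x* ∈ ℝⁿ, x ≠ x*, and let E = [r, e₁, …, e_{n-1}] be an invertible n×n matrix whose first column is r = (x - x*)/‖x - x*‖. Let D = diag(λ_r, 1, …, 1) with 0 ≤ λ_r ≤ 1 and set M = E D E⁻¹. Suppose f ∈ ℝⁿ satisfies [E⁻¹f]₁ ≥ 0 (the coefficient of f along r in the basis E is nonnegative), and suppose P is symmetric positive definite with (∇V(x))ᵀ f < 0 where V(x) = (x - x*)ᵀP(x - x*). Then (∇V(x))ᵀ (M f) < 0. -/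
open Matrix

/-!
Write `f = E c`. Since `D` only rescales the first coordinate, `M f = f - (1 - λ_r) c₀ r`, so the
rate of change of `V` along `M f` is that along `f` minus `(1 - λ_r) c₀ (∇V(x) ⬝ r)`. Both factors
`(1 - λ_r) c₀` and `∇V(x) ⬝ r = 2 (x - x*)ᵀ P (x - x*) / ‖x - x*‖` are nonnegative, so modulation
can only make the decrease of `V` steeper.
-/

namespace Matrix

variable {ι : Type*} [Fintype ι]

theorem PosDef.mulVec_dotProduct_normalize_pos {P : Matrix ι ι ℝ} (hP : P.PosDef) {d : ι → ℝ}
    (hd : d ≠ 0) : 0 < (P *ᵥ d) ⬝ᵥ ((√(d ⬝ᵥ d))⁻¹ • d) := by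
  have hdd : 0 < d ⬝ᵥ d := by simpa using dotProduct_self_star_pos_iff.mpr hd
  have hPd : 0 < d ⬝ᵥ (P *ᵥ d) := by simpa using hP.dotProduct_mulVec_pos hd
  rw [dotProduct_smul, smul_eq_mul, dotProduct_comm (P *ᵥ d)]
  exact mul_pos (inv_pos.mpr (Real.sqrt_pos.mpr hdd)) hPd

section

variable {R : Type*} [DecidableEq ι] [CommRing R]

theorem diagonal_ite_mulVec (i₀ : ι) (l : R) (c : ι → R) :
    diagonal (fun i => if i = i₀ then l else 1) *ᵥ c = c - ((1 - l) * c i₀) • Pi.single i₀ 1 := by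
  funext i
  rw [mulVec_diagonal]
  by_cases h : i = i₀
  · subst h; simp; ring
  · simp [h]

theorem mul_diagonal_ite_mul_inv_mulVec (E : Matrix ι ι R) (hE : IsUnit E.det) (i₀ : ι) (l : R)
    (f : ι → R) :
    (E * diagonal (fun i => if i = i₀ then l else 1) * E⁻¹) *ᵥ f
      = f - ((1 - l) * (E⁻¹ *ᵥ f) i₀) • E.col i₀ := by
  rw [← mulVec_mulVec, ← mulVec_mulVec, diagonal_ite_mulVec, mulVec_sub, mulVec_mulVec,
    mul_nonsing_inv E hE, one_mulVec, mulVec_smul, mulVec_single_one]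

end

end Matrix

theorem modulated_velocity_lyapunov_decrease_general {n : ℕ} [NeZero n]
    (P E : Matrix (Fin n) (Fin n) ℝ) (hP : P.PosDef)
    (xs x f : Fin n → ℝ) (hx : x ≠ xs)
    (r : Fin n → ℝ)
    (hr : r = (Real.sqrt ((x - xs) ⬝ᵥ (x - xs)))⁻¹ • (x - xs))
    (hE : IsUnit E.det) (hcol : ∀ j, E j 0 = r j)
    (l : ℝ) (hl1 : l ≤ 1)
    (M : Matrix (Fin n) (Fin n) ℝ)
    (hM : M = E * Matrix.diagonal (fun i => if i = 0 then l else 1) * E⁻¹)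
    (hf1 : 0 ≤ (E⁻¹.mulVec f) 0)
    (hV : ((2 : ℝ) • P.mulVec (x - xs)) ⬝ᵥ f < 0) :
    ((2 : ℝ) • P.mulVec (x - xs)) ⬝ᵥ (M.mulVec f) < 0 := by
  have hEr : E.col 0 = r := funext hcol
  have hgr : 0 < ((2 : ℝ) • P *ᵥ (x - xs)) ⬝ᵥ r := by
    rw [hr, smul_dotProduct, smul_eq_mul]
    exact mul_pos two_pos (hP.mulVec_dotProduct_normalize_pos (sub_ne_zero.mpr hx))
  rw [hM, mul_diagonal_ite_mul_inv_mulVec E hE, hEr, dotProduct_sub, dotProduct_smul, smul_eq_mul]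
  nlinarith [mul_nonneg (sub_nonneg.mpr hl1) hf1]

/-- Modulating a Lyapunov-decreasing velocity by `M = E D E⁻¹`, where the first
column of `E` is the radial direction `r = (x - x*)/‖x - x*‖` and
`D = diag(λ_r, 1, …, 1)` with `0 ≤ λ_r ≤ 1`, preserves strict Lyapunov decrease
whenever the velocity has nonnegative component along `r`. -/
theorem modulated_velocity_lyapunov_decrease {n : ℕ} [NeZero n]
    (P E : Matrix (Fin n) (Fin n) ℝ) (hP : P.PosDef)
    (xs x f : Fin n → ℝ) (hx : x ≠ xs)
    (r : Fin n → ℝ)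
    (hr : r = (Real.sqrt ((x - xs) ⬝ᵥ (x - xs)))⁻¹ • (x - xs))
    (hE : IsUnit E.det) (hcol : ∀ j, E j 0 = r j)
    (l : ℝ) (hl0 : 0 ≤ l) (hl1 : l ≤ 1)
    (M : Matrix (Fin n) (Fin n) ℝ)
    (hM : M = E * Matrix.diagonal (fun i => if i = 0 then l else 1) * E⁻¹)
    (hf1 : 0 ≤ (E⁻¹.mulVec f) 0)
    (hV : ((2 : ℝ) • P.mulVec (x - xs)) ⬝ᵥ f < 0) :
    ((2 : ℝ) • P.mulVec (x - xs)) ⬝ᵥ (M.mulVec f) < 0 :=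
  modulated_velocity_lyapunov_decrease_general P E hP xs x f hx r hr hE hcol l hl1 M hM hf1 hV
end

section
/- Let f : ℝⁿ → ℝⁿ satisfy (∇V(x))ᵀf(x) < 0 for all x ≠ x* where V(x) = (x-x*)ᵀP(x-x*), P symmetric positive definite. Define g(x) = f(x) when [E(x)⁻¹f(x)]₁ < 0 and g(x) = M(x)f(x) when [E(x)⁻¹f(x)]₁ ≥ 0, where M(x) = E(x)D(x)E(x)⁻¹, E(x) has first column r(x) = (x-x*)/‖x-x*‖ and D(x) = diag(1-Γ(x), 1, …, 1) with 0 < Γ(x) ≤ 1 inside the cut region. Then (∇V(x))ᵀg(x) < 0 for all x ≠ x* in the cut region. -/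
open Matrix

/-!
Writing `f = E c`, the modulation `E D E⁻¹` only shrinks the first coordinate `c₀` of `f` in the
basis given by the columns of `E`, so `g = f - Γ c₀ r` where `r` is the first column of `E`, the
unit radial direction. In the modulated case `Γ c₀ ≥ 0`, and `∇V ⬝ r = 2 (x - x*)ᵀP(x - x*) / ‖x - x*‖`
is positive, hence `∇V ⬝ g ≤ ∇V ⬝ f < 0`.
-/

namespace Matrix

variable {ι R : Type*} [Fintype ι] [DecidableEq ι] [CommRing R]

theorem conj_diagonal_single_mulVec {E : Matrix ι ι R} (hE : IsUnit E.det) (i : ι) (γ : R)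
    (w : ι → R) :
    (E * diagonal (fun j => if j = i then 1 - γ else 1) * E⁻¹) *ᵥ w
      = w - (γ * (E⁻¹ *ᵥ w) i) • E.col i := by
  set c := E⁻¹ *ᵥ w
  have hdiag : diagonal (fun j => if j = i then 1 - γ else 1) *ᵥ c
      = c - (γ * c i) • Pi.single i 1 := by
    ext j
    by_cases hj : j = i
    · subst hj
      simp only [mulVec_diagonal, ↓reduceIte, Pi.sub_apply, Pi.smul_apply, Pi.single_eq_same,
        smul_eq_mul, mul_one]
      ring
    · simp [mulVec_diagonal, hj]
  rw [Matrix.mul_assoc, ← mulVec_mulVec, ← mulVec_mulVec, hdiag, mulVec_sub, mulVec_smul,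
    mulVec_single_one, mulVec_mulVec, mul_nonsing_inv _ hE, one_mulVec]

end Matrix

theorem Matrix.PosDef.dotProduct_mulVec_normalize_pos {n : Type*} [Fintype n]
    {P : Matrix n n ℝ} (hP : P.PosDef) {v : n → ℝ} (hv : v ≠ 0) :
    0 < (P *ᵥ v) ⬝ᵥ ((√(v ⬝ᵥ v))⁻¹ • v) := by
  have hvv : 0 < v ⬝ᵥ v := by simpa using dotProduct_star_self_pos_iff.mpr hv
  have hPv : 0 < v ⬝ᵥ (P *ᵥ v) := by simpa using hP.dotProduct_mulVec_pos hv
  rw [dotProduct_smul, smul_eq_mul]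
  exact mul_pos (inv_pos.mpr (Real.sqrt_pos.mpr hvv)) (hPv.trans_eq (dotProduct_comm _ _))

theorem dotProduct_sub_smul_neg {n R : Type*} [Fintype n] [CommRing R] [LinearOrder R]
    [IsStrictOrderedRing R] {u w r : n → R} {a : R} (hw : u ⬝ᵥ w < 0) (hr : 0 ≤ u ⬝ᵥ r)
    (ha : 0 ≤ a) : u ⬝ᵥ (w - a • r) < 0 := by
  rw [dotProduct_sub, dotProduct_smul, smul_eq_mul]
  linarith [mul_nonneg ha hr]

/-- Theorem 1 (full Lyapunov-decrease claim): the piecewise modulated system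
`g`, which equals the nominal `f` when the flow moves away from the cuts
(`[E(x)⁻¹f(x)]₁ < 0`) and equals `M(x)f(x)` otherwise, strictly decreases the
quadratic Lyapunov function in the cut region where `0 < Γ(x) ≤ 1`. -/
theorem modulated_ds_lyapunov_decrease {n : ℕ} [NeZero n]
    (P : Matrix (Fin n) (Fin n) ℝ) (hP : P.PosDef)
    (xs : Fin n → ℝ)
    (f g : (Fin n → ℝ) → (Fin n → ℝ))
    (hV : ∀ x, x ≠ xs → ((2 : ℝ) • P.mulVec (x - xs)) ⬝ᵥ f x < 0)
    (D : Set (Fin n → ℝ)) (Γ : (Fin n → ℝ) → ℝ)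
    (hΓ : ∀ x ∈ D, 0 < Γ x ∧ Γ x ≤ 1)
    (E : (Fin n → ℝ) → Matrix (Fin n) (Fin n) ℝ)
    (hE : ∀ x, IsUnit (E x).det)
    (hcol : ∀ x, x ≠ xs →
      (fun j => E x j 0) = (Real.sqrt ((x - xs) ⬝ᵥ (x - xs)))⁻¹ • (x - xs))
    (hg1 : ∀ x, ((E x)⁻¹.mulVec (f x)) 0 < 0 → g x = f x)
    (hg2 : ∀ x, 0 ≤ ((E x)⁻¹.mulVec (f x)) 0 →
      g x = (E x * Matrix.diagonal (fun i => if i = 0 then 1 - Γ x else 1)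
        * (E x)⁻¹).mulVec (f x)) :
    ∀ x ∈ D, x ≠ xs → ((2 : ℝ) • P.mulVec (x - xs)) ⬝ᵥ g x < 0 := by
  intro x hxD hx
  rcases lt_or_ge (((E x)⁻¹ *ᵥ f x) 0) 0 with hneg | hnonneg
  · rw [hg1 x hneg]
    exact hV x hx
  · have hradial : 0 ≤ ((2 : ℝ) • P *ᵥ (x - xs)) ⬝ᵥ (E x).col 0 := by
      rw [show (E x).col 0 = _ from hcol x hx, smul_dotProduct, smul_eq_mul]
      have hPr := hP.dotProduct_mulVec_normalize_pos (sub_ne_zero.mpr hx)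
      positivity
    rw [hg2 x hnonneg, conj_diagonal_single_mulVec (hE x)]
    exact dotProduct_sub_smul_neg (hV x hx) hradial (mul_nonneg (hΓ x hxD).1.le hnonneg)
end
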